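/- arXiv:1408.0109 — 6 statements merged into one kernel-verified Lean document; each statement's English description precedes it below -/
import Mathlib

section
/- If G is a connected graph of order n ≥ 3, then 2·γnt(G) ≤ n + 1. -/
open SimpleGraph

variable {V : Type*}

/-- The open neighborhood `N(S)` of a set `S` of vertices: all vertices having a neighbor in `S`. -/
def openNbhd (G : SimpleGraph V) (S : Set V) : Set V := {v | ∃ u ∈ S, G.Adj u v}

/-- `S` is a dominating set: every vertex not in `S` has a neighbor in `S`. -/
def IsDomSet (G : SimpleGraph V) (S : Set V) : Prop := ∀ v ∉ S, ∃ u ∈ S, G.Adj u v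

/-- `S` is a total dominating set: every vertex has a neighbor in `S`. -/
def IsTotalDomSet (G : SimpleGraph V) (S : Set V) : Prop := ∀ v, ∃ u ∈ S, G.Adj u v

/-- `S` is a neighborhood total dominating set: a dominating set such that the subgraph
induced by the open neighborhood `N(S)` has no isolated vertex. -/
def IsNTDSet (G : SimpleGraph V) (S : Set V) : Prop :=
  IsDomSet G S ∧ ∀ v ∈ openNbhd G S, ∃ u ∈ openNbhd G S, G.Adj v u

/-- The domination number `γ(G)`. -/
noncomputable def domNum (G : SimpleGraph V) : ℕ :=
  sInf {n | ∃ S : Set V, IsDomSet G S ∧ S.ncard = n}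

/-- The total domination number `γt(G)`. -/
noncomputable def totalDomNum (G : SimpleGraph V) : ℕ :=
  sInf {n | ∃ S : Set V, IsTotalDomSet G S ∧ S.ncard = n}

/-- The neighborhood total domination number `γnt(G)`. -/
noncomputable def ntdNum (G : SimpleGraph V) : ℕ :=
  sInf {n | ∃ S : Set V, IsNTDSet G S ∧ S.ncard = n}

/-! ### Auxiliary lemmas -/

lemma NTD.induce_reachable {G : SimpleGraph V} {s : Set V} {x y : V} (p : G.Walk x y)
    (hp : ∀ z ∈ p.support, z ∈ s) (hx : x ∈ s) (hy : y ∈ s) :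
    (G.induce s).Reachable ⟨x, hx⟩ ⟨y, hy⟩ := by
  induction p with
  | nil => exact Reachable.refl _
  | @cons a b c h q ih =>
    have hb : b ∈ s := hp b (by simp [Walk.support_cons])
    have h1 : (G.induce s).Adj ⟨a, hx⟩ ⟨b, hb⟩ := by
      simp only [comap_adj, Function.Embedding.coe_subtype]
      exact h
    exact h1.reachable.trans (ih (fun z hz => hp z (by simp [Walk.support_cons, hz])) hb hy)

lemma NTD.induce_connected {G : SimpleGraph V} {s : Set V} {r : V} (hr : r ∈ s)
    (h : ∀ y ∈ s, ∃ p : G.Walk r y, ∀ z ∈ p.support, z ∈ s) :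
    (G.induce s).Connected := by
  rw [connected_iff]
  refine ⟨fun a b => ?_, ⟨⟨r, hr⟩⟩⟩
  obtain ⟨pa, hpa⟩ := h a.1 a.2
  obtain ⟨pb, hpb⟩ := h b.1 b.2
  have ha := NTD.induce_reachable pa hpa hr a.2
  have hb := NTD.induce_reachable pb hpb hr b.2
  exact ha.symm.trans hb

/-- every vertex at positive distance from `r` has a neighbor one closer. -/
lemma NTD.exists_pred {G : SimpleGraph V} (hc : G.Connected) {r x : V} (hx : G.dist r x ≠ 0) :
    ∃ y, G.Adj y x ∧ G.dist r y + 1 = G.dist r x := by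
  obtain ⟨p, hp⟩ := hc.exists_walk_length_eq_dist r x
  cases hq' : p.reverse with
  | nil =>
    exfalso
    have : p.length = 0 := by
      have := congrArg Walk.length hq'
      simpa using this
    rw [this] at hp; exact hx hp.symm
  | @cons _ b _ hadj q =>
    refine ⟨b, hadj.symm, ?_⟩
    have hlb : G.dist r b ≤ q.reverse.length := dist_le _
    have hql : q.length + 1 = p.length := by
      have := congrArg Walk.length hq'
      simpa [Nat.add_comm] using this.symm
    have h1 : G.dist r b ≤ G.dist r x - 1 := by
      rw [← hp, ← hql]; simpa using hlb
    have h2 : G.dist r x ≤ G.dist r b + 1 := by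
      have := hc.dist_triangle (u := r) (v := b) (w := x)
      have hbx : G.dist b x ≤ 1 := by
        have : G.dist b x ≤ (Walk.cons hadj.symm Walk.nil : G.Walk b x).length := dist_le _
        simpa using this
      omega
    omega

lemma NTD.geo_support [DecidableEq V] {G : SimpleGraph V} {r y z : V} (p : G.Walk r y)
    (hp : p.length = G.dist r y) (hz : z ∈ p.support) :
    G.dist r z + G.dist z y ≤ G.dist r y := by
  have h1 : G.dist r z ≤ (p.takeUntil z hz).length := dist_le _
  have h2 : G.dist z y ≤ (p.dropUntil z hz).length := dist_le _
  have h3 : (p.takeUntil z hz).length + (p.dropUntil z hz).length = p.length := by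
    rw [← Walk.length_append, p.take_spec hz]
  omega

lemma NTD.mem_openNbhd_of {G : SimpleGraph V} {S : Set V} {x y : V} (hy : y ∈ S)
    (h : G.Adj y x) : x ∈ openNbhd G S := ⟨y, hy, h⟩

lemma NTD.ntd_insert {G : SimpleGraph V} {X : Set V} {S' : Set ↥(Xᶜ : Set V)}
    (hS' : IsNTDSet (G.induce (Xᶜ : Set V)) S') (t : V)
    (hdom : ∀ x ∈ X, x ∉ insert t (Subtype.val '' S') →
      ∃ z ∈ insert t (Subtype.val '' S'), G.Adj z x)
    (hb : ∀ x ∈ X, x ∈ openNbhd G (insert t (Subtype.val '' S')) →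
      ∃ y ∈ openNbhd G (insert t (Subtype.val '' S')), G.Adj x y) :
    IsNTDSet G (insert t (Subtype.val '' S')) := by
  set S : Set V := insert t (Subtype.val '' S') with hSdef
  have hadj' : ∀ {a b : ↥(Xᶜ : Set V)}, (G.induce (Xᶜ : Set V)).Adj a b → G.Adj a.1 b.1 := by
    intro a b h
    simpa [comap_adj, Function.Embedding.coe_subtype] using h
  constructor
  · intro v hv
    by_cases hvX : v ∈ X
    · exact hdom v hvX hv
    · have hvs : v ∈ (Xᶜ : Set V) := hvX
      have : (⟨v, hvs⟩ : ↥(Xᶜ : Set V)) ∉ S' := by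
        intro h; exact hv (Set.mem_insert_iff.mpr (Or.inr ⟨_, h, rfl⟩))
      obtain ⟨u, hu, huv⟩ := hS'.1 _ this
      exact ⟨u.1, Set.mem_insert_iff.mpr (Or.inr ⟨u, hu, rfl⟩), hadj' huv⟩
  · intro x hx
    by_cases hxX : x ∈ X
    · exact hb x hxX hx
    · have hxs : x ∈ (Xᶜ : Set V) := hxX
      by_cases hx' : (⟨x, hxs⟩ : ↥(Xᶜ : Set V)) ∈ openNbhd (G.induce (Xᶜ : Set V)) S'
      · obtain ⟨y, hy, hyx⟩ := hS'.2 _ hx'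
        obtain ⟨z, hz, hzy⟩ := hy
        exact ⟨y.1, ⟨z.1, Set.mem_insert_iff.mpr (Or.inr ⟨z, hz, rfl⟩), hadj' hzy⟩, hadj' hyx⟩
      · have hxS' : (⟨x, hxs⟩ : ↥(Xᶜ : Set V)) ∈ S' := by
          by_contra h
          obtain ⟨u, hu, huv⟩ := hS'.1 _ h
          exact hx' ⟨u, hu, huv⟩
        have hxS : x ∈ S := Set.mem_insert_iff.mpr (Or.inr ⟨_, hxS', rfl⟩)
        obtain ⟨s₁, hs₁, hs₁x⟩ := hx
        exact ⟨s₁, NTD.mem_openNbhd_of hxS hs₁x.symm, hs₁x.symm⟩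

lemma NTD.f1 {G : SimpleGraph V} {X : Set V} {S' : Set ↥(Xᶜ : Set V)}
    (hS' : IsNTDSet (G.induce (Xᶜ : Set V)) S') {w : V} (hw : w ∉ X)
    (hw' : w ∉ Subtype.val '' S') (t : V) :
    w ∈ openNbhd G (insert t (Subtype.val '' S')) := by
  have hws : w ∈ (Xᶜ : Set V) := hw
  have : (⟨w, hws⟩ : ↥(Xᶜ : Set V)) ∉ S' := fun h => hw' ⟨_, h, rfl⟩
  obtain ⟨u', hu', hadj⟩ := hS'.1 _ this
  refine ⟨u'.1, Set.mem_insert_of_mem _ ⟨u', hu', rfl⟩, ?_⟩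
  simpa [comap_adj, Function.Embedding.coe_subtype] using hadj

lemma NTD.step [Fintype V] {n : ℕ} {G : SimpleGraph V} {X : Set V} {S' : Set ↥(Xᶜ : Set V)}
    (hS' : IsNTDSet (G.induce (Xᶜ : Set V)) S') (hb2 : 2 * S'.ncard ≤ n - 1) (hn : 1 ≤ n)
    (t : V)
    (hdom : ∀ x ∈ X, x ∉ insert t (Subtype.val '' S') →
      ∃ z ∈ insert t (Subtype.val '' S'), G.Adj z x)
    (hb : ∀ x ∈ X, x ∈ openNbhd G (insert t (Subtype.val '' S')) →
      ∃ y ∈ openNbhd G (insert t (Subtype.val '' S')), G.Adj x y) :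
    ∃ S : Set V, IsNTDSet G S ∧ 2 * S.ncard ≤ n + 1 := by
  refine ⟨insert t (Subtype.val '' S'), NTD.ntd_insert hS' t hdom hb, ?_⟩
  have h1 : (insert t (Subtype.val '' S')).ncard ≤ (Subtype.val '' S').ncard + 1 :=
    Set.ncard_insert_le _ _
  have h2 : (Subtype.val '' S').ncard = S'.ncard :=
    Set.ncard_image_of_injective _ Subtype.val_injective
  omega

lemma NTD.ntd_pair {G : SimpleGraph V} {p q : V} (hadj : G.Adj p q)
    (hdom : ∀ z ∉ ({p, q} : Set V), ∃ s ∈ ({p, q} : Set V), G.Adj s z) :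
    IsNTDSet G {p, q} := by
  constructor
  · exact hdom
  · intro x hx
    by_cases hxp : x = p
    · refine ⟨q, ⟨p, Set.mem_insert _ _, hadj⟩, ?_⟩
      rw [hxp]; exact hadj
    by_cases hxq : x = q
    · refine ⟨p, ⟨q, Set.mem_insert_of_mem _ rfl, hadj.symm⟩, ?_⟩
      rw [hxq]; exact hadj.symm
    obtain ⟨s, hs, hsx⟩ := hdom x (by simp [hxp, hxq])
    refine ⟨s, ?_, hsx.symm⟩
    rcases hs with h | h
    · rw [h]; exact ⟨q, Set.mem_insert_of_mem _ rfl, hadj.symm⟩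
    · simp only [Set.mem_singleton_iff] at h; rw [h]
      exact ⟨p, Set.mem_insert _ _, hadj⟩

lemma NTD.four_distinct [Fintype V] (h : Fintype.card V ≤ 3) {a b c d : V}
    (hab : a ≠ b) (hac : a ≠ c) (had : a ≠ d) (hbc : b ≠ c) (hbd : b ≠ d) (hcd : c ≠ d) :
    False := by
  have hinj : Function.Injective ![a, b, c, d] := by
    intro i j hij
    fin_cases i <;> fin_cases j <;> simp_all
  have := Fintype.card_le_of_injective _ hinj
  simp at this
  omega

lemma NTD.five_distinct [Fintype V] (h : Fintype.card V ≤ 4) {a b c d e : V}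
    (hab : a ≠ b) (hac : a ≠ c) (had : a ≠ d) (hae : a ≠ e) (hbc : b ≠ c) (hbd : b ≠ d)
    (hbe : b ≠ e) (hcd : c ≠ d) (hce : c ≠ e) (hde : d ≠ e) : False := by
  have hinj : Function.Injective ![a, b, c, d, e] := by
    intro i j hij
    fin_cases i <;> fin_cases j <;> simp_all
  have := Fintype.card_le_of_injective _ hinj
  simp at this
  omega
universe u

set_option maxHeartbeats 1000000 in
lemma NTD.key : ∀ (n : ℕ) (W : Type u) [Fintype W] (G : SimpleGraph W),
    G.Connected → Fintype.card W = n → 3 ≤ n →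
    ∃ S : Set W, IsNTDSet G S ∧ 2 * S.ncard ≤ n + 1 := by
  intro n
  induction n using Nat.strong_induction_on with
  | _ n IH =>
  intro W _ G hconn hcard hn3
  classical
  obtain ⟨r⟩ := hconn.nonempty
  obtain ⟨u, -, hu⟩ := Finset.exists_max_image (Finset.univ : Finset W) (G.dist r)
    ⟨r, Finset.mem_univ r⟩
  have hmax : ∀ x : W, G.dist r x ≤ G.dist r u := fun x => hu x (Finset.mem_univ x)
  have hdist0 : ∀ x : W, G.dist r x = 0 ↔ r = x := fun x => hconn.dist_eq_zero_iff
  have hrr : G.dist r r = 0 := SimpleGraph.dist_self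
  have hnd : ∀ {x y : W}, G.dist r x ≠ G.dist r y → x ≠ y := fun hd he => hd (by rw [he])
  by_cases hD1 : G.dist r u ≤ 1
  · -- diameter ≤ 1 : S = {r, x0}
    have h2 : 1 < Fintype.card W := by omega
    obtain ⟨x0, hx0⟩ := Fintype.exists_ne_of_one_lt_card h2 r
    have hdx0 : G.dist r x0 = 1 := by
      have hle := hmax x0
      have hne : G.dist r x0 ≠ 0 := fun h => hx0 ((hdist0 x0).mp h).symm
      omega
    have hadj : G.Adj r x0 := SimpleGraph.dist_eq_one_iff_adj.mp hdx0
    refine ⟨{r, x0}, NTD.ntd_pair hadj ?_, ?_⟩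
    · intro z hz
      have hz_r : z ≠ r := fun h => hz (by simp [h])
      have hne : G.dist r z ≠ 0 := fun h => hz_r ((hdist0 z).mp h).symm
      have hle := hmax z
      have hdz : G.dist r z = 1 := by omega
      exact ⟨r, Set.mem_insert _ _, SimpleGraph.dist_eq_one_iff_adj.mp hdz⟩
    · have hpair : ({r, x0} : Set W).ncard = 2 := Set.ncard_pair (fun h => hx0 h.symm)
      omega
  push_neg at hD1
  obtain ⟨v, hv_adj, hv_d⟩ := NTD.exists_pred hconn (by omega : G.dist r u ≠ 0)
  rcases Nat.lt_or_ge n 5 with h5 | h5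
  · -- base cases n = 3, 4
    by_cases hD2 : G.dist r u = 2
    · have hdv : G.dist r v = 1 := by omega
      have hrv : G.Adj r v := SimpleGraph.dist_eq_one_iff_adj.mp hdv
      refine ⟨{r, v}, NTD.ntd_pair hrv ?_, ?_⟩
      · intro z hz
        have hz_r : z ≠ r := fun h => hz (by simp [h])
        have hz_v : z ≠ v := fun h => hz (by simp [h])
        have hne0 : G.dist r z ≠ 0 := fun h => hz_r ((hdist0 z).mp h).symm
        have hle := hmax z
        have hd12 : G.dist r z = 1 ∨ G.dist r z = 2 := by omega
        rcases hd12 with h1 | h1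
        · exact ⟨r, Set.mem_insert _ _, SimpleGraph.dist_eq_one_iff_adj.mp h1⟩
        · by_cases hzu : z = u
          · rw [hzu]; exact ⟨v, Set.mem_insert_of_mem _ rfl, hv_adj⟩
          obtain ⟨y, hy_adj, hy_d⟩ := NTD.exists_pred hconn (by omega : G.dist r z ≠ 0)
          by_cases hyv : y = v
          · refine ⟨v, Set.mem_insert_of_mem _ rfl, ?_⟩
            rw [← hyv]; exact hy_adj
          exfalso
          exact NTD.five_distinct (a := r) (b := v) (c := y) (d := u) (e := z)
            (by omega : Fintype.card W ≤ 4)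
            (hnd (by omega)) (hnd (by omega)) (hnd (by omega)) (Ne.symm hz_r)
            (fun h => hyv h.symm) (hnd (by omega)) (Ne.symm hz_v)
            (hnd (by omega)) (hnd (by omega)) (fun h => hzu h.symm)
      · have hpair : ({r, v} : Set W).ncard = 2 := Set.ncard_pair (hnd (by omega))
        omega
    · -- dist r u ≥ 3
      obtain ⟨w, hw_adj, hw_d⟩ := NTD.exists_pred hconn (by omega : G.dist r v ≠ 0)
      have hD3 : G.dist r u = 3 := by
        by_contra hne4
        have h4le : 4 ≤ G.dist r u := by omega
        obtain ⟨x, hx_adj, hx_d⟩ := NTD.exists_pred hconn (by omega : G.dist r w ≠ 0)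
        exact NTD.five_distinct (a := r) (b := x) (c := w) (d := v) (e := u) (by omega)
          (hnd (by omega)) (hnd (by omega)) (hnd (by omega))
          (hnd (by omega)) (hnd (by omega)) (hnd (by omega)) (hnd (by omega)) (hnd (by omega))
          (hnd (by omega)) (hnd (by omega))
      have hn4 : n = 4 := by
        by_contra h34
        have hc3 : Fintype.card W ≤ 3 := by omega
        exact NTD.four_distinct (a := r) (b := w) (c := v) (d := u) hc3
          (hnd (by omega)) (hnd (by omega)) (hnd (by omega))
          (hnd (by omega)) (hnd (by omega)) (hnd (by omega))
      obtain ⟨x, hx_adj, hx_d⟩ := NTD.exists_pred hconn (by omega : G.dist r w ≠ 0)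
      have hxr : x = r := ((hdist0 x).mp (by omega)).symm
      rw [hxr] at hx_adj
      have hall : ∀ z : W, z = r ∨ z = w ∨ z = v ∨ z = u := by
        intro z
        by_contra hzz
        push_neg at hzz
        obtain ⟨h1, h2, h3, h4⟩ := hzz
        exact NTD.five_distinct (a := r) (b := w) (c := v) (d := u) (e := z) (by omega)
          (hnd (by omega)) (hnd (by omega)) (hnd (by omega))
          (Ne.symm h1) (hnd (by omega)) (hnd (by omega)) (Ne.symm h2) (hnd (by omega))
          (Ne.symm h3) (Ne.symm h4)
      refine ⟨{w, v}, NTD.ntd_pair hw_adj ?_, ?_⟩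
      · intro z hz
        rcases hall z with h | h | h | h
        · rw [h]; exact ⟨w, Set.mem_insert _ _, hx_adj.symm⟩
        · exact absurd (by rw [h]; exact Set.mem_insert _ _) hz
        · exact absurd (by rw [h]; exact Set.mem_insert_of_mem _ rfl) hz
        · rw [h]; exact ⟨v, Set.mem_insert_of_mem _ rfl, hv_adj⟩
      · have hpair : ({w, v} : Set W).ncard = 2 := Set.ncard_pair (hnd (by omega))
        omega
  · -- inductive step, n ≥ 5
    have conn2 : ∀ a b : W, G.dist r a = G.dist r u → G.dist r b = G.dist r u →
        (G.induce (({a, b} : Set W)ᶜ)).Connected := by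
      intro a b hda hdb
      apply NTD.induce_connected (r := r)
      · simp only [Set.mem_compl_iff, Set.mem_insert_iff, Set.mem_singleton_iff]
        push_neg
        exact ⟨hnd (by omega), hnd (by omega)⟩
      · intro y hy
        simp only [Set.mem_compl_iff, Set.mem_insert_iff, Set.mem_singleton_iff] at hy
        push_neg at hy
        obtain ⟨p, hp⟩ := hconn.exists_walk_length_eq_dist r y
        refine ⟨p, fun z hz => ?_⟩
        simp only [Set.mem_compl_iff, Set.mem_insert_iff, Set.mem_singleton_iff]
        push_neg
        have hgeo := NTD.geo_support p hp hz
        have hle := hmax y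
        constructor
        · intro hza
          rw [hza] at hgeo
          have h0 : G.dist a y = 0 := by omega
          exact hy.1 ((hconn.dist_eq_zero_iff).mp h0).symm
        · intro hzb
          rw [hzb] at hgeo
          have h0 : G.dist b y = 0 := by omega
          exact hy.2 ((hconn.dist_eq_zero_iff).mp h0).symm
    have getS' : ∀ a b : W, a ≠ b → (G.induce (({a, b} : Set W)ᶜ)).Connected →
        ∃ S' : Set ↥(({a, b} : Set W)ᶜ), IsNTDSet (G.induce (({a, b} : Set W)ᶜ)) S' ∧
          2 * S'.ncard ≤ n - 1 := by
      intro a b hab hc'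
      have hcc : Fintype.card ↥(({a, b} : Set W)ᶜ) = n - 2 := by
        have h1 : Nat.card ↥(({a, b} : Set W)ᶜ) = (({a, b} : Set W)ᶜ).ncard :=
          Nat.card_coe_set_eq _
        have h2 : ({a, b} : Set W).ncard + (({a, b} : Set W)ᶜ).ncard = Nat.card W :=
          Set.ncard_add_ncard_compl _
        have h3 : ({a, b} : Set W).ncard = 2 := Set.ncard_pair hab
        have h4 : Nat.card W = n := by rw [Nat.card_eq_fintype_card, hcard]
        have h5 : Nat.card ↥(({a, b} : Set W)ᶜ) = Fintype.card ↥(({a, b} : Set W)ᶜ) :=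
          Nat.card_eq_fintype_card
        omega
      obtain ⟨S', h1, h2⟩ := IH (n - 2) (by omega) _ (G.induce _) hc' hcc (by omega)
      exact ⟨S', h1, by omega⟩
    by_cases hP1 : ∃ a b c : W, a ≠ b ∧ G.dist r a = G.dist r u ∧ G.dist r b = G.dist r u ∧
        c ≠ a ∧ c ≠ b ∧ G.Adj a c ∧ G.Adj b c
    · obtain ⟨a, b, c, hab, hda, hdb, hca, hcb, hac, hbc⟩ := hP1
      obtain ⟨S', hS', hS'b⟩ := getS' a b hab (conn2 a b hda hdb)
      have hmemX : ∀ x : W, x ∈ ({a, b} : Set W) ↔ (x = a ∨ x = b) := by simp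
      by_cases hc : c ∈ Subtype.val '' S'
      · refine NTD.step hS' hS'b (by omega) a ?_ ?_
        · intro x hx hxS
          rcases (hmemX x).mp hx with h | h
          · exact absurd (by rw [h]; exact Set.mem_insert _ _) hxS
          · refine ⟨c, Set.mem_insert_of_mem _ hc, ?_⟩
            rw [h]; exact hbc.symm
        · intro x hx hxN
          rcases (hmemX x).mp hx with h | h
          · refine ⟨c, NTD.mem_openNbhd_of (Set.mem_insert _ _) hac, ?_⟩
            rw [h]; exact hac
          · refine ⟨c, NTD.mem_openNbhd_of (Set.mem_insert _ _) hac, ?_⟩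
            rw [h]; exact hbc
      · refine NTD.step hS' hS'b (by omega) c ?_ ?_
        · intro x hx hxS
          rcases (hmemX x).mp hx with h | h
          · refine ⟨c, Set.mem_insert _ _, ?_⟩
            rw [h]; exact hac.symm
          · refine ⟨c, Set.mem_insert _ _, ?_⟩
            rw [h]; exact hbc.symm
        · have hcX : c ∉ ({a, b} : Set W) := by simp [hca, hcb]
          intro x hx hxN
          rcases (hmemX x).mp hx with h | h
          · refine ⟨c, NTD.f1 hS' hcX hc _, ?_⟩
            rw [h]; exact hac
          · refine ⟨c, NTD.f1 hS' hcX hc _, ?_⟩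
            rw [h]; exact hbc
    · by_cases hP2 : ∃ a b : W, a ≠ b ∧ G.dist r a = G.dist r u ∧ G.dist r b = G.dist r u ∧
          G.Adj a b
      · obtain ⟨a, b, hab, hda, hdb, hadj⟩ := hP2
        obtain ⟨S', hS', hS'b⟩ := getS' a b hab (conn2 a b hda hdb)
        have hmemX : ∀ x : W, x ∈ ({a, b} : Set W) ↔ (x = a ∨ x = b) := by simp
        by_cases h2a : ∃ y ∈ Subtype.val '' S', G.Adj a y
        · obtain ⟨y₀, hy₀, hy₀a⟩ := h2a
          refine NTD.step hS' hS'b (by omega) a ?_ ?_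
          · intro x hx hxS
            rcases (hmemX x).mp hx with h | h
            · exact absurd (by rw [h]; exact Set.mem_insert _ _) hxS
            · refine ⟨a, Set.mem_insert _ _, ?_⟩
              rw [h]; exact hadj
          · intro x hx hxN
            rcases (hmemX x).mp hx with h | h
            · refine ⟨y₀, NTD.mem_openNbhd_of (Set.mem_insert _ _) hy₀a, ?_⟩
              rw [h]; exact hy₀a
            · refine ⟨a, NTD.mem_openNbhd_of (Set.mem_insert_of_mem _ hy₀) hy₀a.symm, ?_⟩
              rw [h]; exact hadj.symm
        · by_cases h2b : ∃ y ∈ Subtype.val '' S', G.Adj b y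
          · obtain ⟨y₀, hy₀, hy₀b⟩ := h2b
            refine NTD.step hS' hS'b (by omega) b ?_ ?_
            · intro x hx hxS
              rcases (hmemX x).mp hx with h | h
              · refine ⟨b, Set.mem_insert _ _, ?_⟩
                rw [h]; exact hadj.symm
              · exact absurd (by rw [h]; exact Set.mem_insert _ _) hxS
            · intro x hx hxN
              rcases (hmemX x).mp hx with h | h
              · refine ⟨b, NTD.mem_openNbhd_of (Set.mem_insert_of_mem _ hy₀) hy₀b.symm, ?_⟩
                rw [h]; exact hadj
              · refine ⟨y₀, NTD.mem_openNbhd_of (Set.mem_insert _ _) hy₀b, ?_⟩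
                rw [h]; exact hy₀b
          · obtain ⟨vb, hvb_adj, hvb_d⟩ := NTD.exists_pred hconn (by omega : G.dist r b ≠ 0)
            have hvb_ne_a : vb ≠ a := hnd (by omega)
            have hvb_ne_b : vb ≠ b := hvb_adj.ne
            have hvbX : vb ∉ ({a, b} : Set W) := by simp [hvb_ne_a, hvb_ne_b]
            have hvbS : vb ∉ Subtype.val '' S' := fun hmem => h2b ⟨vb, hmem, hvb_adj.symm⟩
            refine NTD.step hS' hS'b (by omega) a ?_ ?_
            · intro x hx hxS
              rcases (hmemX x).mp hx with h | h
              · exact absurd (by rw [h]; exact Set.mem_insert _ _) hxS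
              · refine ⟨a, Set.mem_insert _ _, ?_⟩
                rw [h]; exact hadj
            · intro x hx hxN
              rcases (hmemX x).mp hx with h | h
              · exfalso
                rw [h] at hxN
                obtain ⟨s₁, hs₁, hs₁a⟩ := hxN
                rcases Set.mem_insert_iff.mp hs₁ with h' | h'
                · rw [h'] at hs₁a; exact hs₁a.ne rfl
                · exact h2a ⟨s₁, h', hs₁a.symm⟩
              · refine ⟨vb, NTD.f1 hS' hvbX hvbS _, ?_⟩
                rw [h]; exact hvb_adj.symm
      · -- neither P1 nor P2 : delete {u, v}
        have hconn3 : (G.induce (({u, v} : Set W)ᶜ)).Connected := by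
          apply NTD.induce_connected (r := r)
          · simp only [Set.mem_compl_iff, Set.mem_insert_iff, Set.mem_singleton_iff]
            push_neg
            exact ⟨hnd (by omega), hnd (by omega)⟩
          · intro y hy
            simp only [Set.mem_compl_iff, Set.mem_insert_iff, Set.mem_singleton_iff] at hy
            push_neg at hy
            obtain ⟨p, hp⟩ := hconn.exists_walk_length_eq_dist r y
            refine ⟨p, fun z hz => ?_⟩
            simp only [Set.mem_compl_iff, Set.mem_insert_iff, Set.mem_singleton_iff]
            push_neg
            have hgeo := NTD.geo_support p hp hz
            have hle := hmax y
            constructor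
            · intro hzu
              rw [hzu] at hgeo
              have h0 : G.dist u y = 0 := by omega
              exact hy.1 ((hconn.dist_eq_zero_iff).mp h0).symm
            · intro hzv
              rw [hzv] at hgeo
              have hd1 : G.dist v y ≠ 0 := fun h0 => hy.2 ((hconn.dist_eq_zero_iff).mp h0).symm
              have hd2 : G.dist v y = 1 := by omega
              have hd3 : G.dist r y = G.dist r u := by omega
              have hadjvy : G.Adj v y := SimpleGraph.dist_eq_one_iff_adj.mp hd2
              exact hP1 ⟨u, y, v, Ne.symm hy.1, rfl, hd3, hv_adj.ne, Ne.symm hy.2,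
                hv_adj.symm, hadjvy.symm⟩
        obtain ⟨S', hS', hS'b⟩ := getS' u v (Ne.symm hv_adj.ne) hconn3
        have hmemX : ∀ x : W, x ∈ ({u, v} : Set W) ↔ (x = u ∨ x = v) := by simp
        by_cases h3a : ∃ y ∈ Subtype.val '' S', G.Adj u y
        · obtain ⟨y₀, hy₀, hy₀u⟩ := h3a
          refine NTD.step hS' hS'b (by omega) u ?_ ?_
          · intro x hx hxS
            rcases (hmemX x).mp hx with h | h
            · exact absurd (by rw [h]; exact Set.mem_insert _ _) hxS
            · refine ⟨u, Set.mem_insert _ _, ?_⟩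
              rw [h]; exact hv_adj.symm
          · intro x hx hxN
            rcases (hmemX x).mp hx with h | h
            · refine ⟨y₀, NTD.mem_openNbhd_of (Set.mem_insert _ _) hy₀u, ?_⟩
              rw [h]; exact hy₀u
            · refine ⟨u, NTD.mem_openNbhd_of (Set.mem_insert_of_mem _ hy₀) hy₀u.symm, ?_⟩
              rw [h]; exact hv_adj
        · by_cases h3b : ∃ y ∈ Subtype.val '' S', G.Adj v y
          · obtain ⟨z₀, hz₀, hz₀v⟩ := h3b
            refine NTD.step hS' hS'b (by omega) v ?_ ?_
            · intro x hx hxS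
              rcases (hmemX x).mp hx with h | h
              · refine ⟨v, Set.mem_insert _ _, ?_⟩
                rw [h]; exact hv_adj
              · exact absurd (by rw [h]; exact Set.mem_insert _ _) hxS
            · intro x hx hxN
              rcases (hmemX x).mp hx with h | h
              · refine ⟨v, NTD.mem_openNbhd_of (Set.mem_insert_of_mem _ hz₀) hz₀v.symm, ?_⟩
                rw [h]; exact hv_adj.symm
              · refine ⟨z₀, NTD.mem_openNbhd_of (Set.mem_insert _ _) hz₀v, ?_⟩
                rw [h]; exact hz₀v
          · by_cases h3ii : ∃ y₀, G.Adj u y₀ ∧ y₀ ≠ v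
            · obtain ⟨y₀, hy₀u, hy₀v⟩ := h3ii
              have hy₀X : y₀ ∉ ({u, v} : Set W) := by simp [hy₀u.ne', hy₀v]
              have hy₀S : y₀ ∉ Subtype.val '' S' := fun hmem => h3a ⟨y₀, hmem, hy₀u⟩
              refine NTD.step hS' hS'b (by omega) v ?_ ?_
              · intro x hx hxS
                rcases (hmemX x).mp hx with h | h
                · refine ⟨v, Set.mem_insert _ _, ?_⟩
                  rw [h]; exact hv_adj
                · exact absurd (by rw [h]; exact Set.mem_insert _ _) hxS
              · intro x hx hxN
                rcases (hmemX x).mp hx with h | h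
                · refine ⟨y₀, NTD.f1 hS' hy₀X hy₀S _, ?_⟩
                  rw [h]; exact hy₀u
                · exfalso
                  rw [h] at hxN
                  obtain ⟨s₁, hs₁, hs₁v⟩ := hxN
                  rcases Set.mem_insert_iff.mp hs₁ with h' | h'
                  · rw [h'] at hs₁v; exact hs₁v.ne rfl
                  · exact h3b ⟨s₁, h', hs₁v.symm⟩
            · push_neg at h3ii
              obtain ⟨w, hw_adj, hw_d⟩ := NTD.exists_pred hconn (by omega : G.dist r v ≠ 0)
              have hw_ne_u : w ≠ u := hnd (by omega)
              have hw_ne_v : w ≠ v := hw_adj.ne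
              have hwX : w ∉ ({u, v} : Set W) := by simp [hw_ne_u, hw_ne_v]
              have hwS : w ∉ Subtype.val '' S' := fun hmem => h3b ⟨w, hmem, hw_adj.symm⟩
              refine NTD.step hS' hS'b (by omega) u ?_ ?_
              · intro x hx hxS
                rcases (hmemX x).mp hx with h | h
                · exact absurd (by rw [h]; exact Set.mem_insert _ _) hxS
                · refine ⟨u, Set.mem_insert _ _, ?_⟩
                  rw [h]; exact hv_adj.symm
              · intro x hx hxN
                rcases (hmemX x).mp hx with h | h
                · exfalso
                  rw [h] at hxN
                  obtain ⟨s₁, hs₁, hs₁u⟩ := hxN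
                  have hs₁v : s₁ = v := h3ii s₁ hs₁u.symm
                  rcases Set.mem_insert_iff.mp hs₁ with h' | h'
                  · rw [hs₁v] at h'; exact hv_adj.ne h'
                  · rw [hs₁v] at h'
                    obtain ⟨sv, hsvS, hev⟩ := h'
                    have hvc : (sv : W) ∈ (({u, v} : Set W)ᶜ) := sv.2
                    rw [hev] at hvc
                    exact hvc (Set.mem_insert_of_mem _ rfl)
                · refine ⟨w, NTD.f1 hS' hwX hwS _, ?_⟩
                  rw [h]; exact hw_adj.symm

theorem stmt2 [Fintype V] (G : SimpleGraph V) (hconn : G.Connected)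
    (hn : 3 ≤ Fintype.card V) :
    2 * ntdNum G ≤ Fintype.card V + 1 := by
  obtain ⟨S, hS, hb⟩ := NTD.key (Fintype.card V) V G hconn rfl hn
  have h1 : ntdNum G ≤ S.ncard := Nat.sInf_le ⟨S, hS, rfl⟩
  omega
end

section
/- For every k ≥ 1, the subdivided star obtained from the star K_{1,k} by subdividing every edge exactly once (a tree of order n = 2k + 1) has neighborhood total domination number γnt equal to k + 1 = (n + 1)/2. -/
open SimpleGraph

variable {V : Type*}

/-- The subdivided star obtained from the star `K_{1,k}` by subdividing every edge exactly
once: vertex `0` is the center, adjacent to `1, ..., k`, and each `i` (for `1 ≤ i ≤ k`) is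
adjacent to the leaf `k + i`. It has order `2 * k + 1`. -/
def subdividedStar (k : ℕ) : SimpleGraph (Fin (2 * k + 1)) :=
  SimpleGraph.fromRel (fun a b =>
    (a.val = 0 ∧ 1 ≤ b.val ∧ b.val ≤ k) ∨ (1 ≤ a.val ∧ a.val ≤ k ∧ b.val = a.val + k))

/-!
The center together with the `k` subdivision vertices is a total dominating set, hence an NTD
set, of size `k + 1`. Conversely, every arm `0 - i - (i + k)` must meet a dominating set `S`,
since its leaf is dominated only by itself or by `i`, so `|S| ≥ k`. To gain one more vertex:
either the center lies in `S`, or it is dominated by some `i ∈ S`; then the leaf `i + k` lies in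
`N(S)`, so its only neighbor `i` must be in `N(S)` too; as the center is not in `S`, this forces
the leaf into `S`, and that arm meets `S` twice.
-/

theorem IsTotalDomSet.isNTDSet {G : SimpleGraph V} {S : Set V} (hS : IsTotalDomSet G S) :
    IsNTDSet G S :=
  ⟨fun v _ => hS v, fun v _ => (hS v).imp fun _ ⟨_, huv⟩ => ⟨hS _, huv.symm⟩⟩

theorem IsNTDSet.exists_adj_ne_of_forall_adj_eq {G : SimpleGraph V} {S : Set V} {u v : V}
    (hS : IsNTDSet G S) (hv : ∀ x, G.Adj v x → x = u) (huv : G.Adj u v) (hu : u ∈ S)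
    (hvS : v ∉ S) : ∃ y ∈ S, G.Adj y u ∧ y ≠ v := by
  obtain ⟨x, ⟨y, hyS, hyx⟩, hvx⟩ := hS.2 v ⟨u, hu, huv⟩
  obtain rfl := hv x hvx
  exact ⟨y, hyS, hyx, fun h => hvS (h ▸ hyS)⟩

namespace subdividedStar

variable {k : ℕ}

theorem adj_iff {a b : Fin (2 * k + 1)} :
    (subdividedStar k).Adj a b ↔
      (a.val = 0 ∧ 1 ≤ b.val ∧ b.val ≤ k) ∨ (1 ≤ a.val ∧ a.val ≤ k ∧ b.val = a.val + k) ∨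
      (b.val = 0 ∧ 1 ≤ a.val ∧ a.val ≤ k) ∨ (1 ≤ b.val ∧ b.val ≤ k ∧ a.val = b.val + k) := by
  simp only [subdividedStar, fromRel_adj, Ne, Fin.ext_iff]
  omega

/-- The index `i` of the arm `0 - i - (i + k)` through `v`; the center gets `0`. -/
def arm (k : ℕ) (v : Fin (2 * k + 1)) : ℕ := if v.val ≤ k then v.val else v.val - k

def MeetsAllArms (k : ℕ) (T : Set (Fin (2 * k + 1))) : Prop :=
  ∀ j, 1 ≤ j → j ≤ k → ∃ v ∈ T, arm k v = j

theorem MeetsAllArms.le_ncard {T : Set (Fin (2 * k + 1))} (hT : MeetsAllArms k T) :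
    k ≤ T.ncard :=
  calc k = (Set.Icc 1 k).ncard := by simp
    _ ≤ (arm k '' T).ncard := Set.ncard_le_ncard (fun j hj => hT j hj.1 hj.2) (T.toFinite.image _)
    _ ≤ T.ncard := Set.ncard_image_le

theorem meetsAllArms_of_isDomSet {S : Set (Fin (2 * k + 1))}
    (hS : IsDomSet (subdividedStar k) S) : MeetsAllArms k S := by
  intro j hj hjk
  by_cases hleaf : (⟨j + k, by omega⟩ : Fin (2 * k + 1)) ∈ S
  · exact ⟨_, hleaf, by simp only [arm]; split_ifs <;> omega⟩
  · obtain ⟨u, huS, hu⟩ := hS _ hleaf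
    rw [adj_iff] at hu
    dsimp only at hu
    exact ⟨u, huS, by simp only [arm]; split_ifs <;> omega⟩

theorem exists_meetsAllArms_sdiff_singleton_of_isNTDSet {S : Set (Fin (2 * k + 1))}
    (hS : IsNTDSet (subdividedStar k) S) : ∃ w ∈ S, MeetsAllArms k (S \ {w}) := by
  have hmeets := meetsAllArms_of_isDomSet hS.1
  by_cases h0 : (0 : Fin (2 * k + 1)) ∈ S
  · refine ⟨0, h0, fun j hj hjk => ?_⟩
    obtain ⟨v, hvS, hv⟩ := hmeets j hj hjk
    refine ⟨v, ⟨hvS, ?_⟩, hv⟩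
    rintro rfl
    simp only [arm, Fin.val_zero, zero_le, ite_true] at hv
    omega
  obtain ⟨i, hiS, hi⟩ := hS.1 0 h0
  rw [adj_iff] at hi
  simp only [Fin.val_zero] at hi
  set leaf : Fin (2 * k + 1) := ⟨i.val + k, by omega⟩
  have hleaf : leaf ∈ S := by
    by_contra hleaf
    obtain ⟨y, hyS, hy, hyleaf⟩ := hS.exists_adj_ne_of_forall_adj_eq
      (fun x hx => Fin.ext (by rw [adj_iff] at hx; simp only [leaf] at hx; omega))
      (by rw [adj_iff]; dsimp only [leaf]; omega) hiS hleaf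
    rw [adj_iff] at hy
    have hy0 : y ≠ 0 := by rintro rfl; exact h0 hyS
    rw [Ne, Fin.ext_iff] at hy0 hyleaf
    simp only [leaf, Fin.val_zero] at hy0 hyleaf
    omega
  refine ⟨leaf, hleaf, fun j hj hjk => ?_⟩
  obtain ⟨v, hvS, hv⟩ := hmeets j hj hjk
  by_cases hvl : v = leaf
  · refine ⟨i, ⟨hiS, fun h => ?_⟩, ?_⟩
    · rw [Set.mem_singleton_iff, Fin.ext_iff] at h
      simp only [leaf] at h
      omega
    · subst hvl
      simp only [arm, leaf] at hv ⊢
      split_ifs at hv ⊢ <;> omega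
  · exact ⟨v, ⟨hvS, hvl⟩, hv⟩

theorem succ_le_ncard_of_isNTDSet {S : Set (Fin (2 * k + 1))}
    (hS : IsNTDSet (subdividedStar k) S) : k + 1 ≤ S.ncard := by
  obtain ⟨w, hwS, hw⟩ := exists_meetsAllArms_sdiff_singleton_of_isNTDSet hS
  rw [← Set.ncard_sdiff_singleton_add_one hwS]
  exact Nat.succ_le_succ hw.le_ncard

theorem isTotalDomSet_setOf_val_le (hk : 1 ≤ k) :
    IsTotalDomSet (subdividedStar k) {v | v.val ≤ k} := by
  intro v
  by_cases hv : v.val = 0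
  · exact ⟨⟨1, by omega⟩, by simp [hk], by rw [adj_iff]; simp only; omega⟩
  by_cases hvk : v.val ≤ k
  · exact ⟨0, by simp, by rw [adj_iff]; simp only [Fin.val_zero, true_and]; omega⟩
  · exact ⟨⟨v.val - k, by omega⟩, by change v.val - k ≤ k; omega,
      by rw [adj_iff]; simp only; omega⟩

theorem ncard_setOf_val_le : {v : Fin (2 * k + 1) | v.val ≤ k}.ncard = k + 1 := by
  have : Fin.val '' {v : Fin (2 * k + 1) | v.val ≤ k} = Set.Iic k := by
    ext n
    exact ⟨fun ⟨v, hv, hvn⟩ => hvn ▸ hv, fun hn => ⟨⟨n, by rw [Set.mem_Iic] at hn; omega⟩, hn, rfl⟩⟩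
  rw [← Set.ncard_image_of_injective _ Fin.val_injective, this, Set.ncard_Iic_nat]

end subdividedStar

theorem stmt5 (k : ℕ) (hk : 1 ≤ k) : ntdNum (subdividedStar k) = k + 1 :=
  IsLeast.csInf_eq
    ⟨⟨_, (subdividedStar.isTotalDomSet_setOf_val_le hk).isNTDSet,
        subdividedStar.ncard_setOf_val_le⟩,
      fun _ ⟨_, hS, hcard⟩ => hcard ▸ subdividedStar.succ_le_ncard_of_isNTDSet hS⟩
end

section
/- If T is a tree of order n ≥ 6 with 2·γnt(T) = n, then the diameter of T is at least 4 (equivalently, T is neither a star nor a double star). -/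
/-!
A tree of diameter at most 3 has an edge `ab` such that `{a, b}` dominates it: a vertex on the
`a`-side of `ab` at distance 2 from `a` would be at distance 4 from any other neighbour of `b`.
A dominating set inducing no isolated vertex is an NTD-set, so `γnt(T) ≤ 2` and `n ≤ 4`.
-/

open SimpleGraph

variable {V : Type*}

theorem IsNTDSet.of_isDomSet_of_subset_openNbhd {G : SimpleGraph V} {S : Set V}
    (hdom : IsDomSet G S) (hS : S ⊆ openNbhd G S) : IsNTDSet G S :=
  ⟨hdom, fun _ ⟨u, hu, huv⟩ => ⟨u, hS hu, huv.symm⟩⟩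

theorem ntdNum_le_two_of_adj {G : SimpleGraph V} {a b : V} (hab : G.Adj a b)
    (hdom : IsDomSet G {a, b}) : ntdNum G ≤ 2 := by
  refine Nat.sInf_le ⟨{a, b}, .of_isDomSet_of_subset_openNbhd hdom ?_, Set.ncard_pair hab.ne⟩
  rw [Set.insert_subset_iff, Set.singleton_subset_iff]
  exact ⟨⟨b, by simp, hab.symm⟩, ⟨a, by simp, hab⟩⟩

namespace SimpleGraph.IsTree

variable {G : SimpleGraph V}

/-- Both `a` and `a'` are the penultimate vertex of a shortest, hence of the unique, path from
`w` to `b`. -/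
theorem eq_of_adj_of_dist_add_one_eq (hT : G.IsTree) {w a a' b : V}
    (ha : G.Adj a b) (ha' : G.Adj a' b)
    (hwa : G.dist w a + 1 = G.dist w b) (hwa' : G.dist w a' + 1 = G.dist w b) : a = a' := by
  have concat_isPath : ∀ {x} (hx : G.Adj x b), G.dist w x + 1 = G.dist w b →
      ∃ q : G.Walk w x, (q.concat hx).IsPath := fun {x} hx hwx => by
    obtain ⟨q, hq⟩ := hT.connected.exists_walk_length_eq_dist w x
    exact ⟨q, (q.concat hx).isPath_of_length_eq_dist (by rw [Walk.length_concat, hq, hwx])⟩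
  obtain ⟨p, hp⟩ := concat_isPath ha hwa
  obtain ⟨p', hp'⟩ := concat_isPath ha' hwa'
  have hpp' := (hT.isAcyclic.subsingleton_path w b).elim ⟨_, hp⟩ ⟨_, hp'⟩
  exact (Walk.concat_inj (congrArg Subtype.val hpp')).1

theorem dist_le_one_of_dist_add_one_eq (hT : G.IsTree) (hG : ∀ x y, G.dist x y ≤ 3)
    {w a b v : V} (hab : G.Adj a b) (hbv : G.Adj b v) (hav : a ≠ v)
    (hw : G.dist w a + 1 = G.dist w b) : G.dist w a ≤ 1 := by
  rcases hT.dist_eq_dist_add_one_of_adj w hbv with h | h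
  · exact absurd (hT.eq_of_adj_of_dist_add_one_eq hab hbv.symm hw h.symm) hav
  · have := hG w v
    omega

theorem isDomSet_pair_of_dist_le_one (hT : G.IsTree) {a b : V} (hab : G.Adj a b)
    (ha : ∀ w, G.dist w a + 1 = G.dist w b → G.dist w a ≤ 1)
    (hb : ∀ w, G.dist w b + 1 = G.dist w a → G.dist w b ≤ 1) : IsDomSet G {a, b} := by
  intro w hw
  simp only [Set.mem_insert_iff, Set.mem_singleton_iff, not_or] at hw
  have adj_of_dist_le_one : ∀ {x}, w ≠ x → G.dist w x ≤ 1 → G.Adj x w := fun hne hle =>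
    (not_not.mp fun hnadj => (hT.connected.one_lt_dist_of_ne_of_not_adj hne hnadj).not_ge hle).symm
  rcases hT.dist_eq_dist_add_one_of_adj w hab with h | h
  · exact ⟨b, by simp, adj_of_dist_le_one hw.2 (hb w h.symm)⟩
  · exact ⟨a, by simp, adj_of_dist_le_one hw.1 (ha w h.symm)⟩

theorem exists_adj_isDomSet_pair [Nontrivial V] (hT : G.IsTree) (hG : ∀ x y, G.dist x y ≤ 3) :
    ∃ a b, G.Adj a b ∧ IsDomSet G {a, b} := by
  by_cases h2 : ∀ x y, G.dist x y ≤ 2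
  · obtain ⟨a, -⟩ := exists_pair_ne V
    obtain ⟨b, hab⟩ := hT.connected.preconnected.exists_adj_of_nontrivial a
    refine ⟨a, b, hab, hT.isDomSet_pair_of_dist_le_one hab (fun w _ => ?_) (fun w _ => ?_)⟩
    · have := h2 w b
      omega
    · have := h2 w a
      omega
  push Not at h2
  obtain ⟨u, v, huv⟩ := h2
  obtain ⟨p, hp⟩ := hT.connected.exists_walk_length_eq_dist u v
  have hp3 : p.length = 3 := by
    have := hG u v
    omega
  have hua : G.Adj u (p.getVert 1) := by simpa using p.adj_getVert_succ (i := 0) (by omega)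
  have hab : G.Adj (p.getVert 1) (p.getVert 2) := p.adj_getVert_succ (by omega)
  have hbv : G.Adj (p.getVert 2) v := by
    simpa [← hp3] using p.adj_getVert_succ (i := 2) (by omega)
  have hub : u ≠ p.getVert 2 := fun h => by
    have := dist_eq_one_iff_adj.mpr hbv
    rw [← h] at this
    omega
  have hav : p.getVert 1 ≠ v := fun h => by
    have := dist_eq_one_iff_adj.mpr hua
    rw [h] at this
    omega
  exact ⟨_, _, hab, hT.isDomSet_pair_of_dist_le_one hab
    (fun _ => hT.dist_le_one_of_dist_add_one_eq hG hab hbv hav)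
    (fun _ => hT.dist_le_one_of_dist_add_one_eq hG hab.symm hua.symm hub.symm)⟩

end SimpleGraph.IsTree

theorem stmt14 [Fintype V] (G : SimpleGraph V) (hT : G.IsTree)
    (hn : 6 ≤ Fintype.card V) (h : 2 * ntdNum G = Fintype.card V) :
    4 ≤ G.diam := by
  by_contra! hdiam
  have : Nontrivial V := Fintype.one_lt_card_iff_nontrivial.mp (by omega)
  have hG : ∀ x y, G.dist x y ≤ 3 := fun x y =>
    (dist_le_diam (connected_iff_ediam_ne_top.mp hT.connected)).trans (by omega)
  obtain ⟨a, b, hab, hdom⟩ := hT.exists_adj_isDomSet_pair hG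
  have := ntdNum_le_two_of_adj hab hdom
  omega
end

section
/- Let T be a tree, let u be a leaf of T whose unique neighbor v has degree 2 in T, and let w be the neighbor of v other than u. If the tree T' = T − {u, v} has order at least 2, then γnt(T) ≤ γnt(T') + 1. (Given any minimum NTD-set D* of T', the set D* ∪ {v} if w ∈ D*, and D* ∪ {u} otherwise, is an NTD-set of T.) -/
open SimpleGraph

variable {V : Type*}

theorem stmt15 [Fintype V] (G : SimpleGraph V) [DecidableRel G.Adj]
    (hT : G.IsTree) (u v w : V)
    (hu : G.degree u = 1) (huv : G.Adj u v)
    (hv : G.degree v = 2) (hvw : G.Adj v w) (hwu : w ≠ u)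
    (horder : 2 ≤ Nat.card ({u, v}ᶜ : Set V)) :
    ntdNum G ≤ ntdNum (G.induce ({u, v}ᶜ : Set V)) + 1 ∧
    ∀ D : Set ({u, v}ᶜ : Set V),
      IsNTDSet (G.induce ({u, v}ᶜ : Set V)) D →
      D.ncard = ntdNum (G.induce ({u, v}ᶜ : Set V)) →
      (w ∈ Subtype.val '' D → IsNTDSet G (Subtype.val '' D ∪ {v})) ∧
      (w ∉ Subtype.val '' D → IsNTDSet G (Subtype.val '' D ∪ {u})) := by
  classical
  have hvw' : v ≠ w := hvw.ne
  have huv' : u ≠ v := huv.ne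
  have hwC : w ∈ ({u, v}ᶜ : Set V) := by simp [hwu, hvw'.symm]
  have huC : u ∉ ({u, v}ᶜ : Set V) := by simp
  have hvC : v ∉ ({u, v}ᶜ : Set V) := by simp
  -- the only neighbor of u is v
  have honly_u : ∀ x, G.Adj u x → x = v := by
    intro x hx
    have h1 : ({v} : Finset V) ⊆ G.neighborFinset u :=
      Finset.singleton_subset_iff.mpr ((SimpleGraph.mem_neighborFinset G u v).2 huv)
    have hdu : (G.neighborFinset u).card = 1 := hu
    have h2 : G.neighborFinset u = {v} :=
      (Finset.eq_of_subset_of_card_le h1 (by rw [hdu, Finset.card_singleton])).symm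
    have : x ∈ G.neighborFinset u := (SimpleGraph.mem_neighborFinset G u x).2 hx
    rw [h2] at this
    exact Finset.mem_singleton.mp this
  -- the only neighbors of v are u and w
  have honly_v : ∀ x, G.Adj v x → x = u ∨ x = w := by
    intro x hx
    have h1 : ({u, w} : Finset V) ⊆ G.neighborFinset v := by
      intro y hy
      simp only [Finset.mem_insert, Finset.mem_singleton] at hy
      rcases hy with rfl | rfl
      · exact (SimpleGraph.mem_neighborFinset G v y).2 huv.symm
      · exact (SimpleGraph.mem_neighborFinset G v y).2 hvw
    have hcard : (({u, w} : Finset V)).card = 2 := by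
      rw [Finset.card_insert_of_notMem (by simpa using (Ne.symm hwu))]
      simp
    have hdv : (G.neighborFinset v).card = 2 := hv
    have h2 : G.neighborFinset v = {u, w} :=
      (Finset.eq_of_subset_of_card_le h1 (by rw [hdv, hcard])).symm
    have : x ∈ G.neighborFinset v := (SimpleGraph.mem_neighborFinset G v x).2 hx
    rw [h2] at this
    rcases Finset.mem_insert.mp this with h | h
    · exact Or.inl h
    · exact Or.inr (Finset.mem_singleton.mp h)
  -- the key construction
  have key : ∀ D : Set ({u, v}ᶜ : Set V),
      IsNTDSet (G.induce ({u, v}ᶜ : Set V)) D →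
      (w ∈ Subtype.val '' D → IsNTDSet G (Subtype.val '' D ∪ {v})) ∧
      (w ∉ Subtype.val '' D → IsNTDSet G (Subtype.val '' D ∪ {u})) := by
    intro D hD
    obtain ⟨hDdom, hDnt⟩ := hD
    set S : Set V := Subtype.val '' D with hS
    have hSC : S ⊆ ({u, v}ᶜ : Set V) := by
      rintro _ ⟨a, _, rfl⟩; exact a.2
    -- domination in the induced graph, expressed in V
    have hdom' : ∀ x, x ∈ ({u, v}ᶜ : Set V) → x ∉ S → ∃ s ∈ S, G.Adj s x := by
      intro x hx hxS
      have hxD : (⟨x, hx⟩ : ({u, v}ᶜ : Set V)) ∉ D := by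
        intro h; exact hxS ⟨⟨x, hx⟩, h, rfl⟩
      obtain ⟨y, hyD, hyadj⟩ := hDdom ⟨x, hx⟩ hxD
      exact ⟨y.1, ⟨y, hyD, rfl⟩, hyadj⟩
    -- NT condition in the induced graph, expressed in V
    have hnt' : ∀ x, x ∈ ({u, v}ᶜ : Set V) → x ∈ openNbhd G S →
        ∃ y ∈ openNbhd G S, G.Adj x y := by
      intro x hx hxN
      obtain ⟨s, hsS, hsadj⟩ := hxN
      obtain ⟨a, haD, rfl⟩ := hsS
      have hxN' : (⟨x, hx⟩ : ({u, v}ᶜ : Set V)) ∈ openNbhd (G.induce ({u, v}ᶜ : Set V)) D :=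
        ⟨a, haD, hsadj⟩
      obtain ⟨y, hyN, hyadj⟩ := hDnt ⟨x, hx⟩ hxN'
      obtain ⟨b, hbD, hbadj⟩ := hyN
      exact ⟨y.1, ⟨b.1, ⟨b, hbD, rfl⟩, hbadj⟩, hyadj⟩
    have huS : u ∉ S := fun h => huC (hSC h)
    have hvS : v ∉ S := fun h => hvC (hSC h)
    constructor
    · -- case w ∈ S : use S ∪ {v}
      intro hwS
      have hvN : v ∈ openNbhd G (S ∪ {v}) := ⟨w, Or.inl hwS, hvw.symm⟩
      have huN : u ∈ openNbhd G (S ∪ {v}) := ⟨v, Or.inr rfl, huv.symm⟩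
      constructor
      · -- dominating
        intro x hx
        by_cases hxu : x = u
        · exact ⟨v, Or.inr rfl, hxu ▸ huv.symm⟩
        · have hxv : x ≠ v := fun h => hx (Or.inr h)
          have hxC : x ∈ ({u, v}ᶜ : Set V) := by simp [hxu, hxv]
          have hxS : x ∉ S := fun h => hx (Or.inl h)
          obtain ⟨s, hsS, hs⟩ := hdom' x hxC hxS
          exact ⟨s, Or.inl hsS, hs⟩
      · -- NT
        intro x hxN
        by_cases hxu : x = u
        · subst hxu; exact ⟨v, hvN, huv⟩
        by_cases hxv : x = v
        · subst hxv; exact ⟨u, huN, huv.symm⟩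
        have hxC : x ∈ ({u, v}ᶜ : Set V) := by simp [hxu, hxv]
        obtain ⟨s, hsS, hsadj⟩ := hxN
        rcases hsS with hsS | hsv
        · obtain ⟨y, hyN, hyadj⟩ := hnt' x hxC ⟨s, hsS, hsadj⟩
          obtain ⟨z, hzS, hzadj⟩ := hyN
          exact ⟨y, ⟨z, Or.inl hzS, hzadj⟩, hyadj⟩
        · -- s = v, so x = w
          rcases honly_v x (hsv ▸ hsadj) with rfl | rfl
          · exact absurd rfl hxu
          · exact ⟨v, hvN, hvw.symm⟩
    · -- case w ∉ S : use S ∪ {u}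
      intro hwS
      have hwN : w ∈ openNbhd G S := by
        obtain ⟨s, hsS, hs⟩ := hdom' w hwC hwS
        exact ⟨s, hsS, hs⟩
      have hwN' : w ∈ openNbhd G (S ∪ {u}) := by
        obtain ⟨s, hsS, hs⟩ := hwN; exact ⟨s, Or.inl hsS, hs⟩
      constructor
      · -- dominating
        intro x hx
        by_cases hxv : x = v
        · exact ⟨u, Or.inr rfl, hxv ▸ huv⟩
        · have hxu : x ≠ u := fun h => hx (Or.inr h)
          have hxC : x ∈ ({u, v}ᶜ : Set V) := by simp [hxu, hxv]
          have hxS : x ∉ S := fun h => hx (Or.inl h)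
          obtain ⟨s, hsS, hs⟩ := hdom' x hxC hxS
          exact ⟨s, Or.inl hsS, hs⟩
      · -- NT
        intro x hxN
        obtain ⟨s, hsS, hsadj⟩ := hxN
        rcases hsS with hsS | hsu
        · -- s ∈ S, so x ∈ C
          have hsC := hSC hsS
          have hxu : x ≠ u := by
            rintro rfl
            have := honly_u s hsadj.symm
            subst this
            exact hvC hsC
          have hxv : x ≠ v := by
            rintro rfl
            rcases honly_v s hsadj.symm with rfl | rfl
            · exact huC hsC
            · exact hwS hsS
          have hxC : x ∈ ({u, v}ᶜ : Set V) := by simp [hxu, hxv]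
          obtain ⟨y, hyN, hyadj⟩ := hnt' x hxC ⟨s, hsS, hsadj⟩
          obtain ⟨z, hzS, hzadj⟩ := hyN
          exact ⟨y, ⟨z, Or.inl hzS, hzadj⟩, hyadj⟩
        · -- s = u, so x = v
          have hxv : x = v := honly_u x (hsu ▸ hsadj)
          subst hxv
          exact ⟨w, hwN', hvw⟩
  refine ⟨?_, fun D hD _ => key D hD⟩
  -- first conjunct: the bound
  have huniv : IsNTDSet (G.induce ({u, v}ᶜ : Set V)) Set.univ := by
    constructor
    · intro x hx; exact absurd (Set.mem_univ x) hx
    · intro x hxN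
      obtain ⟨s, _, hsadj⟩ := hxN
      exact ⟨s, ⟨x, Set.mem_univ x, hsadj.symm⟩, hsadj.symm⟩
  have hne : {n | ∃ S : Set ({u, v}ᶜ : Set V),
      IsNTDSet (G.induce ({u, v}ᶜ : Set V)) S ∧ S.ncard = n}.Nonempty :=
    ⟨(Set.univ : Set ({u, v}ᶜ : Set V)).ncard, Set.univ, huniv, rfl⟩
  obtain ⟨D, hD, hDcard⟩ : ∃ D : Set ({u, v}ᶜ : Set V),
      IsNTDSet (G.induce ({u, v}ᶜ : Set V)) D ∧
      D.ncard = ntdNum (G.induce ({u, v}ᶜ : Set V)) := Nat.sInf_mem hne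
  have hScard : (Subtype.val '' D).ncard = D.ncard :=
    Set.ncard_image_of_injective D Subtype.val_injective
  have hSC : Subtype.val '' D ⊆ ({u, v}ᶜ : Set V) := by
    rintro _ ⟨a, _, rfl⟩; exact a.2
  by_cases hw : w ∈ Subtype.val '' D
  · have hNTD := (key D hD).1 hw
    have hvS : v ∉ Subtype.val '' D := fun h => hvC (hSC h)
    have hcard : (Subtype.val '' D ∪ {v}).ncard = D.ncard + 1 := by
      rw [Set.union_singleton, Set.ncard_insert_of_notMem hvS, hScard]
    have := Nat.sInf_le (s := {n | ∃ S : Set V, IsNTDSet G S ∧ S.ncard = n})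
      ⟨Subtype.val '' D ∪ {v}, hNTD, rfl⟩
    calc ntdNum G ≤ (Subtype.val '' D ∪ {v}).ncard := this
      _ = ntdNum (G.induce ({u, v}ᶜ : Set V)) + 1 := by rw [hcard, hDcard]
  · have hNTD := (key D hD).2 hw
    have huS : u ∉ Subtype.val '' D := fun h => huC (hSC h)
    have hcard : (Subtype.val '' D ∪ {u}).ncard = D.ncard + 1 := by
      rw [Set.union_singleton, Set.ncard_insert_of_notMem huS, hScard]
    have := Nat.sInf_le (s := {n | ∃ S : Set V, IsNTDSet G S ∧ S.ncard = n})
      ⟨Subtype.val '' D ∪ {u}, hNTD, rfl⟩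
    calc ntdNum G ≤ (Subtype.val '' D ∪ {u}).ncard := this
      _ = ntdNum (G.induce ({u, v}ᶜ : Set V)) + 1 := by rw [hcard, hDcard]
end

section
/- Let G be a connected graph and let T be a spanning tree of G. Then every NTD-set of T is an NTD-set of G; consequently γnt(G) ≤ γnt(T). -/
open SimpleGraph

variable {V : Type*}

theorem stmt16 [Fintype V] (G T : SimpleGraph V) (hG : G.Connected)
    (hT : T.IsTree) (hle : T ≤ G) :
    (∀ S : Set V, IsNTDSet T S → IsNTDSet G S) ∧ ntdNum G ≤ ntdNum T := by
  have hTconn : T.Connected := hT.isConnected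
  have hsub : ∀ S : Set V, openNbhd T S ⊆ openNbhd G S := by
    rintro S v ⟨u, hu, hadj⟩
    exact ⟨u, hu, hle hadj⟩
  have main : ∀ S : Set V, IsNTDSet T S → IsNTDSet G S := by
    rintro S ⟨hdom, hnbr⟩
    refine ⟨fun v hv => ?_, fun v hv => ?_⟩
    · obtain ⟨u, hu, hadj⟩ := hdom v hv
      exact ⟨u, hu, hle hadj⟩
    · by_cases hvT : v ∈ openNbhd T S
      · obtain ⟨u, hu, hadj⟩ := hnbr v hvT
        exact ⟨u, hsub S hu, hle hadj⟩
      · -- v has no T-neighbor in S, so v ∈ S (else domination gives one)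
        have hvS : v ∈ S := by
          by_contra hvS
          obtain ⟨u, hu, hadj⟩ := hdom v hvS
          exact hvT ⟨u, hu, hadj⟩
        -- v has some vertex distinct from it (from hv), and T is connected,
        -- so v has a T-neighbor w; then w ∈ openNbhd T S.
        obtain ⟨u, _, hadj⟩ := hv
        have hne : v ≠ u := fun h => (h ▸ hadj).ne rfl
        obtain ⟨p⟩ := hTconn v u
        obtain ⟨w, hadjT⟩ : ∃ w, T.Adj v w := by
          cases p with
          | nil => exact absurd rfl hne
          | cons h _ => exact ⟨_, h⟩
        exact ⟨w, hsub S ⟨v, hvS, hadjT⟩, hle hadjT⟩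
  refine ⟨main, ?_⟩
  have hne : {n | ∃ S : Set V, IsNTDSet T S ∧ S.ncard = n}.Nonempty := by
    refine ⟨(Set.univ : Set V).ncard, Set.univ, ⟨fun v hv => absurd (Set.mem_univ v) hv,
      fun v hv => ?_⟩, rfl⟩
    obtain ⟨u, _, hadj⟩ := hv
    exact ⟨u, ⟨v, Set.mem_univ v, hadj.symm⟩, hadj.symm⟩
  obtain ⟨S, hS, hcard⟩ := Nat.sInf_mem hne
  exact Nat.sInf_le ⟨S, main S hS, hcard⟩
end

section
/- Let G be a connected graph of even order n ≥ 4 with 2·γnt(G) = n. Then every spanning tree T of G satisfies 2·γnt(T) = n. -/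
/-!
A spanning tree `T` of `G` has no isolated vertex, so every NTD-set of `T` is one of `G` and
`γnt(G) ≤ γnt(T)`. Conversely `2 γnt(T) ≤ n + 1` for every tree of order `n ≥ 3`: at the second
vertex `v` of a longest path all neighbours but one are leaves. Deleting two leaves at `v`, or a
leaf at `v` together with `v` when `v` has degree two, leaves a tree of order `n - 2`, and an
NTD-set of that tree extends to one of `T` by a single vertex. The remaining trees are stars and
the path on four vertices, where two adjacent central vertices form a total dominating set. For
even `n` the two bounds squeeze `2 γnt(T)` to `n`.
-/

open SimpleGraph

variable {V : Type*}

namespace SimpleGraph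

variable {G : SimpleGraph V} {s : Set V}

lemma Walk.IsTrail.exists_adj_adj_of_mem_support {a b z : V} {p : G.Walk a b}
    (hp : p.IsTrail) (hz : z ∈ p.support) (hza : z ≠ a) (hzb : z ≠ b) :
    ∃ x ∈ p.support, ∃ y ∈ p.support, x ≠ y ∧ G.Adj z x ∧ G.Adj z y := by
  classical
  have hq : ¬ (p.takeUntil z hz).Nil := Walk.not_nil_of_ne hza.symm
  have hr : ¬ (p.dropUntil z hz).Nil := Walk.not_nil_of_ne hzb
  have hxz := (p.takeUntil z hz).mk_penultimate_end_mem_edges hq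
  have hzy := (p.dropUntil z hz).mk_start_snd_mem_edges hr
  refine ⟨_, p.support_takeUntil_subset_support hz
      ((p.takeUntil z hz).fst_mem_support_of_mem_edges hxz),
    _, p.support_dropUntil_subset_support hz ((p.dropUntil z hz).snd_mem_support_of_mem_edges hzy),
    fun hxy => ?_, ((p.takeUntil z hz).adj_penultimate hq).symm, (p.dropUntil z hz).adj_snd hr⟩
  -- the two edges at `z` would coincide, but a trail does not repeat edges
  rw [hxy, Sym2.eq_swap] at hxz
  exact hp.disjoint_edges_takeUntil_dropUntil hz hxz hzy

lemma Preconnected.induce_of_forall_isPath_support_subset (hG : G.Preconnected)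
    (h : ∀ a ∈ s, ∀ b ∈ s, ∀ p : G.Walk a b, p.IsPath → ∀ z ∈ p.support, z ∈ s) :
    (G.induce s).Preconnected := by
  rintro ⟨a, ha⟩ ⟨b, hb⟩
  obtain ⟨p, hp⟩ := hG.exists_isPath a b
  exact ⟨p.induce s (h a ha b hb p hp)⟩

lemma Preconnected.adj_of_forall_adj_neighborSet_eq (hG : G.Preconnected) {v x : V}
    (hv : ∀ y, G.Adj v y → G.neighborSet y = {v}) (hxv : x ≠ v) : G.Adj v x := by
  obtain ⟨p, hp⟩ := hG.exists_isPath v x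
  have hnil : ¬ p.Nil := Walk.not_nil_of_ne hxv.symm
  have hsnd := p.adj_snd hnil
  by_contra hvx
  refine hp.isTrail.not_mem_support_of_subsingleton_neighborSet hsnd.ne.symm
    (fun h => hvx (h ▸ hsnd)) ((hv _ hsnd).symm ▸ Set.subsingleton_singleton) ?_
  exact p.snd_mem_support_of_mem_edges (p.mk_start_snd_mem_edges hnil)

lemma Connected.exists_isPath_two_le_length [Finite V] (hG : G.Connected)
    (h3 : 3 ≤ Nat.card V) : ∃ (a b : V) (p : G.Walk a b), p.IsPath ∧ 2 ≤ p.length := by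
  have : Nontrivial V := Finite.one_lt_card_iff_nontrivial.mp (by omega)
  obtain ⟨x⟩ := hG.nonempty
  obtain ⟨y, hxy⟩ := hG.preconnected.exists_adj_of_nontrivial x
  obtain ⟨z, hzx, hzy⟩ : ∃ z, z ≠ x ∧ z ≠ y := by
    by_contra! h
    have : (Set.univ : Set V) ⊆ {x, y} := fun z _ => by
      by_cases hzx : z = x
      exacts [Or.inl hzx, Or.inr (h z hzx)]
    have := (Set.ncard_le_ncard this).trans (Set.ncard_insert_le x {y})
    rw [Set.ncard_univ, Set.ncard_singleton] at this
    omega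
  by_cases hxz : G.Adj x z
  · exact ⟨y, z, .cons hxy.symm (.cons hxz .nil), by simp [hxy.ne.symm, hzx.symm, hzy.symm],
      by simp⟩
  · obtain ⟨p, hp⟩ := hG.preconnected.exists_isPath x z
    match p, hp with
    | .nil, _ => exact absurd rfl hzx
    | .cons h .nil, _ => exact absurd h hxz
    | .cons _ (.cons _ _), hp => exact ⟨x, z, _, hp, by simp⟩

/-- `v` is the second vertex of a longest path and `w` the third one: a neighbour of `v` other
than `w` with a second neighbour would extend the path. -/
lemma IsTree.exists_adj_forall_adj_ne_neighborSet_eq [Finite V] (hG : G.IsTree)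
    (h3 : 3 ≤ Nat.card V) : ∃ v w u, G.Adj v w ∧ G.Adj v u ∧ u ≠ w ∧
      ∀ y, G.Adj v y → y ≠ w → G.neighborSet y = {v} := by
  have : Nonempty V := hG.connected.nonempty
  obtain ⟨a, b, p, hp, hmax⟩ := Walk.exists_isPath_forall_isPath_length_le_length G
  obtain ⟨a', b', p', hp', hlen⟩ := hG.connected.exists_isPath_two_le_length h3
  match p, hp, hmax, hlen.trans (hmax _ _ p' hp') with
  | .nil, _, _, h2 => simp at h2
  | .cons _ .nil, _, _, h2 => simp at h2
  | .cons hav (.cons (v := w) hvw q), hp, hmax, _ =>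
    have hr : (Walk.cons hvw q).IsPath := hp.of_cons
    refine ⟨_, w, a, hvw, hav.symm, ?_, fun y hvy hyw => ?_⟩
    · rintro rfl
      exact (Walk.cons_isPath_iff _ _).mp hp |>.2 (by simp)
    have hyr : y ∉ (Walk.cons hvw q).support := fun hy =>
      hyw ((hG.isAcyclic.eq_snd_of_adj_start hr hvy hy).trans (Walk.snd_cons q hvw))
    have hr' : (Walk.cons hvy.symm (Walk.cons hvw q)).IsPath := hr.cons hyr
    ext z
    refine ⟨fun hyz => ?_, fun hz => hz ▸ hvy.symm⟩
    by_contra hzv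
    have hz : z ∉ (Walk.cons hvy.symm (Walk.cons hvw q)).support := fun hz =>
      hzv ((hG.isAcyclic.eq_snd_of_adj_start hr' hyz hz).trans (Walk.snd_cons _ _))
    have := hmax _ _ _ (hr'.cons (h := hyz.symm) hz)
    simp at this

lemma IsTree.induce_compl_pendant_pair {u₁ u₂ v : V} (hG : G.IsTree)
    (hu₁ : G.neighborSet u₁ = {v}) (hu₂ : G.neighborSet u₂ = {v}) :
    (G.induce {u₁, u₂}ᶜ).IsTree := by
  have hvs : v ∈ ({u₁, u₂}ᶜ : Set V) := by
    rintro (rfl | rfl)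
    exacts [G.irrefl ((Set.ext_iff.mp hu₁ _).mpr rfl), G.irrefl ((Set.ext_iff.mp hu₂ _).mpr rfl)]
  refine ⟨(connected_iff _).mpr ⟨hG.connected.preconnected.induce_of_degree_eq_one ?_, ⟨⟨v, hvs⟩⟩⟩,
    hG.isAcyclic.induce _⟩
  intro x hx
  rcases Set.notMem_compl_iff.mp hx with rfl | rfl
  · exact hu₁ ▸ Set.subsingleton_singleton
  · exact hu₂ ▸ Set.subsingleton_singleton

lemma IsTree.induce_compl_pendant_path {u v w : V} (hG : G.IsTree) (huw : u ≠ w)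
    (hu : G.neighborSet u = {v}) (hv : G.neighborSet v = {u, w}) :
    (G.induce {u, v}ᶜ).IsTree := by
  have hvw : G.Adj v w := (Set.ext_iff.mp hv w).mpr (Or.inr rfl)
  have hws : w ∈ ({u, v}ᶜ : Set V) := by
    rintro (rfl | rfl)
    exacts [huw rfl, hvw.ne rfl]
  refine ⟨(connected_iff _).mpr
    ⟨hG.connected.preconnected.induce_of_forall_isPath_support_subset ?_, ⟨⟨w, hws⟩⟩⟩,
    hG.isAcyclic.induce _⟩
  intro a ha b hb p hp
  have hup : u ∉ p.support := hp.isTrail.not_mem_support_of_subsingleton_neighborSet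
    (fun h => ha (Or.inl h.symm)) (fun h => hb (Or.inl h.symm)) (hu ▸ Set.subsingleton_singleton)
  -- an inner vertex of a path has two neighbours on it, but `u` is not on it
  have hvp : v ∉ p.support := by
    intro hvp
    obtain ⟨x, hx, y, hy, hxy, hvx, hvy⟩ := hp.isTrail.exists_adj_adj_of_mem_support hvp
      (fun h => ha (Or.inr h.symm)) (fun h => hb (Or.inr h.symm))
    have hw {y : V} (hy : y ∈ p.support) (hvy : G.Adj v y) : y = w :=
      (hv ▸ hvy : y ∈ ({u, w} : Set V)).resolve_left fun h => hup (h ▸ hy)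
    exact hxy ((hw hx hvx).trans (hw hy hvy).symm)
  rintro z hz (rfl | rfl)
  exacts [hup hz, hvp hz]

end SimpleGraph

variable {G T : SimpleGraph V} {S D s : Set V}

lemma openNbhd_mono {S S' : Set V} (h : S ⊆ S') : openNbhd G S ⊆ openNbhd G S' :=
  fun _ ⟨u, hu, huv⟩ => ⟨u, h hu, huv⟩

lemma mem_openNbhd_insert {c v : V} :
    v ∈ openNbhd G (insert c S) ↔ G.Adj c v ∨ v ∈ openNbhd G S := by
  simp [openNbhd]

lemma isNTDSet_univ (G : SimpleGraph V) : IsNTDSet G Set.univ :=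
  ⟨fun _ hv => absurd trivial hv, fun v ⟨u, _, huv⟩ => ⟨u, ⟨v, trivial, huv.symm⟩, huv.symm⟩⟩

lemma IsTotalDomSet.isNTDSet_s17 (h : IsTotalDomSet G S) : IsNTDSet G S :=
  ⟨fun v _ => h v, fun v _ =>
    let ⟨u, _, huv⟩ := h v
    ⟨u, h u, huv.symm⟩⟩

lemma IsNTDSet.mono (hle : T ≤ G) (hT : ∀ v, ∃ u, T.Adj v u) (h : IsNTDSet T S) :
    IsNTDSet G S := by
  have hN : openNbhd T S ⊆ openNbhd G S := fun _ ⟨u, hu, huv⟩ => ⟨u, hu, hle huv⟩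
  refine ⟨fun v hv => ?_, fun v hv => ?_⟩
  · obtain ⟨u, hu, huv⟩ := h.1 v hv
    exact ⟨u, hu, hle huv⟩
  · by_cases hvT : v ∈ openNbhd T S
    · obtain ⟨u, hu, hvu⟩ := h.2 v hvT
      exact ⟨u, hN hu, hle hvu⟩
    · -- `v` is not dominated in `T`, so `v ∈ S` and its `T`-neighbours lie in `N(S)`
      have hvS : v ∈ S := by
        by_contra hvS
        obtain ⟨u, hu, huv⟩ := h.1 v hvS
        exact hvT ⟨u, hu, huv⟩
      obtain ⟨u, hvu⟩ := hT v
      exact ⟨u, hN ⟨v, hvS, hvu⟩, hle hvu⟩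

lemma ntdNum_le (h : IsNTDSet G S) : ntdNum G ≤ S.ncard :=
  Nat.sInf_le ⟨S, h, rfl⟩

lemma ntdNum_le_of_le (hle : T ≤ G) (hT : ∀ v, ∃ u, T.Adj v u) : ntdNum G ≤ ntdNum T := by
  obtain ⟨S, hS, hcard⟩ : ntdNum T ∈ {n | ∃ S : Set V, IsNTDSet T S ∧ S.ncard = n} :=
    Nat.sInf_mem ⟨_, Set.univ, isNTDSet_univ T, rfl⟩
  exact hcard ▸ ntdNum_le (hS.mono hle hT)

/-- An NTD-set of the induced subgraph `G[s]`, phrased with vertices of `G`. -/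
def IsNTDSetIn (G : SimpleGraph V) (s D : Set V) : Prop :=
  D ⊆ s ∧ (∀ v ∈ s, v ∉ D → ∃ u ∈ D, G.Adj u v) ∧
    ∀ v ∈ s ∩ openNbhd G D, ∃ u ∈ s ∩ openNbhd G D, G.Adj v u

lemma IsNTDSet.isNTDSetIn_image_val {S : Set s} (h : IsNTDSet (G.induce s) S) :
    IsNTDSetIn G s (Subtype.val '' S) := by
  refine ⟨Subtype.coe_image_subset s S, fun v hv hvS => ?_, ?_⟩
  · obtain ⟨u, hu, huv⟩ := h.1 ⟨v, hv⟩ fun hS => hvS ⟨_, hS, rfl⟩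
    exact ⟨u, ⟨u, hu, rfl⟩, huv⟩
  · rintro v ⟨hv, _, ⟨u, hu, rfl⟩, huv⟩
    obtain ⟨x, ⟨y, hy, hyx⟩, hvx⟩ := h.2 ⟨v, hv⟩ ⟨u, hu, huv⟩
    exact ⟨x, ⟨x.2, y, ⟨y, hy, rfl⟩, hyx⟩, hvx⟩

lemma IsNTDSetIn.isNTDSet_insert {c : V} (hD : IsNTDSetIn G s D)
    (hdom : ∀ v ∉ s, v ≠ c → ∃ u ∈ insert c D, G.Adj u v)
    (hN : ∀ v ∈ openNbhd G (insert c D), v ∉ s ∨ G.Adj c v →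
      ∃ u ∈ openNbhd G (insert c D), G.Adj v u) :
    IsNTDSet G (insert c D) := by
  refine ⟨fun v hv => ?_, fun v hv => ?_⟩
  · by_cases hvs : v ∈ s
    · obtain ⟨u, hu, huv⟩ := hD.2.1 v hvs fun h => hv (Or.inr h)
      exact ⟨u, Or.inr hu, huv⟩
    · exact hdom v hvs fun h => hv (Or.inl h)
  · by_cases hvc : v ∉ s ∨ G.Adj c v
    · exact hN v hv hvc
    · rw [not_or, not_not] at hvc
      have hvD : v ∈ openNbhd G D := (mem_openNbhd_insert.mp hv).resolve_left hvc.2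
      obtain ⟨u, ⟨-, hu⟩, hvu⟩ := hD.2.2 v ⟨hvc.1, hvD⟩
      exact ⟨u, openNbhd_mono (Set.subset_insert c D) hu, hvu⟩

lemma IsNTDSetIn.exists_isNTDSet_insert_of_pendant_pair {u₁ u₂ v w : V} (hvw : G.Adj v w)
    (hu₁ : G.neighborSet u₁ = {v}) (hu₂ : G.neighborSet u₂ = {v})
    (hD : IsNTDSetIn G {u₁, u₂}ᶜ D) : ∃ c, IsNTDSet G (insert c D) := by
  have hadj {x : V} (hx : x ∉ ({u₁, u₂}ᶜ : Set V)) : G.Adj v x := by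
    rcases Set.notMem_compl_iff.mp hx with rfl | rfl
    · exact G.adj_symm (hu₁.symm ▸ rfl : v ∈ G.neighborSet x)
    · exact G.adj_symm (hu₂.symm ▸ rfl : v ∈ G.neighborSet x)
  by_cases hv : v ∈ openNbhd G D
  · have hvN : v ∈ openNbhd G (insert v D) := openNbhd_mono (Set.subset_insert v D) hv
    refine ⟨v, hD.isNTDSet_insert (fun x hx _ => ⟨v, Or.inl rfl, hadj hx⟩) ?_⟩
    rintro x - (hx | hx)
    · exact ⟨v, hvN, (hadj hx).symm⟩
    · exact ⟨v, hvN, hx.symm⟩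
  · -- then `v ∈ D`, so adding `w` puts both `v` and `w` into the open neighbourhood
    have hvD : v ∈ D := by
      by_contra hvD
      have hvs : v ∈ ({u₁, u₂}ᶜ : Set V) := fun hx => (hadj (not_not_intro hx)).ne rfl
      obtain ⟨u, hu, huv⟩ := hD.2.1 v hvs hvD
      exact hv ⟨u, hu, huv⟩
    refine ⟨w, hD.isNTDSet_insert (fun x hx _ => ⟨v, Or.inr hvD, hadj hx⟩) ?_⟩
    rintro x - (hx | hx)
    · exact ⟨v, ⟨w, Or.inl rfl, hvw.symm⟩, (hadj hx).symm⟩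
    · exact ⟨w, ⟨v, Or.inr hvD, hvw⟩, hx.symm⟩

lemma IsNTDSetIn.exists_isNTDSet_insert_of_pendant_path {u v w : V} (huw : u ≠ w)
    (hu : G.neighborSet u = {v}) (hv : G.neighborSet v = {u, w})
    (hD : IsNTDSetIn G {u, v}ᶜ D) : ∃ c, IsNTDSet G (insert c D) := by
  have hu' (x : V) : G.Adj u x ↔ x = v := Set.ext_iff.mp hu x
  have hv' (x : V) : G.Adj v x ↔ x = u ∨ x = w := Set.ext_iff.mp hv x
  have hvu : G.Adj v u := (hv' u).mpr (Or.inl rfl)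
  have hvw : G.Adj v w := (hv' w).mpr (Or.inr rfl)
  have hvD : v ∉ D := fun h => hD.1 h (Or.inr rfl)
  by_cases hw : w ∈ openNbhd G D
  · refine ⟨u, hD.isNTDSet_insert ?_ ?_⟩
    · intro x hx hxu
      obtain rfl : x = v := (Set.notMem_compl_iff.mp hx).resolve_left hxu
      exact ⟨u, Or.inl rfl, hvu.symm⟩
    · -- the only candidate is `v`: `u` itself is not dominated, as `v ∉ insert u D`
      rintro x ⟨y, hy, hyx⟩ hx
      obtain rfl : x = v := by
        rcases hx with hx | hx
        · rcases Set.notMem_compl_iff.mp hx with rfl | rfl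
          · obtain rfl := (hu' y).mp hyx.symm
            exact absurd (hy.resolve_left hvu.ne) hvD
          · rfl
        · exact (hu' x).mp hx
      exact ⟨w, openNbhd_mono (Set.subset_insert u D) hw, hvw⟩
  · have hwD : w ∈ D := by
      by_contra hwD
      have hws : w ∈ ({u, v}ᶜ : Set V) := by
        rintro (rfl | rfl)
        exacts [huw rfl, hvw.ne rfl]
      obtain ⟨y, hy, hyw⟩ := hD.2.1 w hws hwD
      exact hw ⟨y, hy, hyw⟩
    have hvN : v ∈ openNbhd G (insert v D) := ⟨w, Or.inr hwD, hvw.symm⟩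
    have hwN : w ∈ openNbhd G (insert v D) := ⟨v, Or.inl rfl, hvw⟩
    refine ⟨v, hD.isNTDSet_insert ?_ ?_⟩
    · intro x hx hxv
      obtain rfl : x = u := (Set.notMem_compl_iff.mp hx).resolve_right hxv
      exact ⟨v, Or.inl rfl, hvu⟩
    · rintro x - hx
      have hx' : x = u ∨ x = v ∨ x = w := by
        rcases hx with hx | hx
        · rcases Set.notMem_compl_iff.mp hx with rfl | rfl <;> simp
        · rcases (hv' x).mp hx with rfl | rfl <;> simp
      rcases hx' with rfl | rfl | rfl
      · exact ⟨v, hvN, hvu.symm⟩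
      · exact ⟨w, hwN, hvw⟩
      · exact ⟨v, hvN, hvw.symm⟩

lemma ncard_compl_pair_add_two [Finite V] {a b : V} (hab : a ≠ b) :
    ({a, b}ᶜ : Set V).ncard + 2 = Nat.card V := by
  rw [← Set.ncard_pair hab, add_comm, Set.ncard_add_ncard_compl]

def HasHalfNTDSet (T : SimpleGraph V) : Prop :=
  ∃ S, IsNTDSet T S ∧ 2 * S.ncard ≤ Nat.card V + 1

lemma IsTotalDomSet.hasHalfNTDSet [Finite V] {v w : V} (h : IsTotalDomSet T {v, w}) (hvw : v ≠ w)
    (h3 : 3 ≤ Nat.card V) : HasHalfNTDSet T :=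
  ⟨_, h.isNTDSet_s17, by rw [Set.ncard_pair hvw]; omega⟩

lemma HasHalfNTDSet.of_induce_compl_pair [Finite V] {a b : V} (hab : a ≠ b)
    (h : HasHalfNTDSet (T.induce {a, b}ᶜ))
    (hext : ∀ D, IsNTDSetIn T {a, b}ᶜ D → ∃ c, IsNTDSet T (insert c D)) : HasHalfNTDSet T := by
  obtain ⟨S, hS, hS2⟩ := h
  obtain ⟨c, hc⟩ := hext _ hS.isNTDSetIn_image_val
  refine ⟨_, hc, ?_⟩
  have hcard := ncard_compl_pair_add_two hab
  have := Set.ncard_insert_le c (Subtype.val '' S)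
  rw [Set.ncard_image_of_injective _ Subtype.val_injective] at this
  rw [Nat.card_coe_set_eq] at hS2
  omega

lemma SimpleGraph.Preconnected.isTotalDomSet_pair {v w : V} (hG : G.Preconnected) (hvw : G.Adj v w)
    (hv : ∀ y, G.Adj v y → G.neighborSet y = {v}) : IsTotalDomSet G {v, w} := fun x => by
  by_cases hxv : x = v
  · exact ⟨w, Or.inr rfl, hxv ▸ hvw.symm⟩
  · exact ⟨v, Or.inl rfl, hG.adj_of_forall_adj_neighborSet_eq hv hxv⟩

lemma SimpleGraph.IsTree.hasHalfNTDSet_of_pendant_path [Finite V] {u v w x : V} (hT : T.IsTree)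
    (ih : ∀ a b : V, a ≠ b → (T.induce {a, b}ᶜ).IsTree → 2 < ({a, b}ᶜ : Set V).ncard →
      HasHalfNTDSet (T.induce {a, b}ᶜ))
    (h3 : 3 ≤ Nat.card V) (huw : u ≠ w) (hu : T.neighborSet u = {v})
    (hv : T.neighborSet v = {u, w}) (hwx : T.Adj w x) (hxv : x ≠ v) : HasHalfNTDSet T := by
  have hvu : T.Adj v u := (Set.ext_iff.mp hv u).mpr (Or.inl rfl)
  have hvw : T.Adj v w := (Set.ext_iff.mp hv w).mpr (Or.inr rfl)
  have hws : w ∈ ({u, v}ᶜ : Set V) := by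
    rintro (h | h)
    exacts [huw h.symm, hvw.ne h.symm]
  have hxs : x ∈ ({u, v}ᶜ : Set V) := by
    rintro (h | h)
    exacts [hvw.ne ((Set.ext_iff.mp hu w).mp (h ▸ hwx.symm)).symm, hxv h]
  by_cases hs : 2 < ({u, v}ᶜ : Set V).ncard
  · exact (ih u v hvu.ne.symm (hT.induce_compl_pendant_path huw hu hv) hs).of_induce_compl_pair
      hvu.ne.symm fun D hD => hD.exists_isNTDSet_insert_of_pendant_path huw hu hv
  -- otherwise `T` is the path `u v w x`
  have hy (y : V) (hy : y ∈ ({u, v}ᶜ : Set V)) : y = w ∨ y = x := by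
    by_contra h
    rw [not_or] at h
    exact hs ((Set.two_lt_ncard_iff).mpr ⟨w, x, y, hws, hxs, hy, hwx.ne, Ne.symm h.1, Ne.symm h.2⟩)
  refine IsTotalDomSet.hasHalfNTDSet (fun y => ?_) hvw.ne h3
  by_cases hyuv : y = u ∨ y = v
  · rcases hyuv with rfl | rfl
    · exact ⟨v, Or.inl rfl, hvu⟩
    · exact ⟨w, Or.inr rfl, hvw.symm⟩
  · rcases hy y hyuv with rfl | rfl
    · exact ⟨v, Or.inl rfl, hvw⟩
    · exact ⟨w, Or.inr rfl, hwx⟩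

lemma SimpleGraph.IsTree.hasHalfNTDSet_of_forall_induce_compl_pair [Finite V] (hT : T.IsTree)
    (h3 : 3 ≤ Nat.card V)
    (ih : ∀ a b : V, a ≠ b → (T.induce {a, b}ᶜ).IsTree → 2 < ({a, b}ᶜ : Set V).ncard →
      HasHalfNTDSet (T.induce {a, b}ᶜ)) : HasHalfNTDSet T := by
  obtain ⟨v, w, u, hvw, hvu, huw, hpend⟩ := hT.exists_adj_forall_adj_ne_neighborSet_eq h3
  have hu := hpend u hvu huw
  by_cases hw : ∃ x, T.Adj w x ∧ x ≠ v
  swap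
  · -- `T` is a star centred at `v`
    simp only [not_exists, not_and, not_not] at hw
    refine (hT.connected.preconnected.isTotalDomSet_pair hvw fun y hvy => ?_).hasHalfNTDSet
      hvw.ne h3
    by_cases hyw : y = w
    · exact hyw ▸ Set.ext fun x => ⟨hw x, fun hx => hx ▸ hvw.symm⟩
    · exact hpend y hvy hyw
  obtain ⟨x, hwx, hxv⟩ := hw
  by_cases hA : ∃ u', T.Adj v u' ∧ u' ≠ w ∧ u' ≠ u
  · obtain ⟨u', hvu', hu'w, hu'u⟩ := hA
    have hu' := hpend u' hvu' hu'w
    have hx {y : V} (hy : T.neighborSet y = {v}) : x ≠ y := fun hxy =>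
      hvw.ne ((Set.ext_iff.mp hy w).mp (hxy ▸ hwx.symm)).symm
    have hs : 2 < ({u, u'}ᶜ : Set V).ncard := by
      refine (Set.two_lt_ncard_iff).mpr ⟨v, w, x, ?_, ?_, ?_, hvw.ne, hxv.symm, hwx.ne⟩
      · rintro (h | h)
        exacts [hvu.ne h, hvu'.ne h]
      · rintro (h | h)
        exacts [huw h.symm, hu'w h.symm]
      · rintro (h | h)
        exacts [hx hu h, hx hu' h]
    exact (ih u u' hu'u.symm (hT.induce_compl_pendant_pair hu hu') hs).of_induce_compl_pair
      hu'u.symm fun D hD => hD.exists_isNTDSet_insert_of_pendant_pair hvw hu hu'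
  refine hT.hasHalfNTDSet_of_pendant_path ih h3 huw hu
    (Set.ext fun y => ⟨fun hvy => ?_, ?_⟩) hwx hxv
  · by_contra h
    rw [Set.mem_insert_iff, Set.mem_singleton_iff, not_or] at h
    exact hA ⟨y, hvy, h.2, h.1⟩
  · rintro (rfl | rfl)
    exacts [hvu, hvw]

theorem SimpleGraph.IsTree.hasHalfNTDSet [Finite V] (hT : T.IsTree) (h3 : 3 ≤ Nat.card V) :
    HasHalfNTDSet T := by
  induction hn : Nat.card V using Nat.strong_induction_on generalizing V with
  | _ n ih =>
  subst hn
  refine hT.hasHalfNTDSet_of_forall_induce_compl_pair h3 fun a b hab hs h2 => ?_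
  have hcard := ncard_compl_pair_add_two hab
  exact ih _ (by rw [Nat.card_coe_set_eq]; omega) hs (by rw [Nat.card_coe_set_eq]; omega) rfl

theorem stmt17_general [Fintype V] (G : SimpleGraph V)
    (heven : Even (Fintype.card V)) (hn : 4 ≤ Fintype.card V)
    (h : 2 * ntdNum G = Fintype.card V) :
    ∀ T : SimpleGraph V, T ≤ G → T.IsTree → 2 * ntdNum T = Fintype.card V := by
  intro T hle hT
  rw [Fintype.card_eq_nat_card] at *
  have : Nontrivial V := Finite.one_lt_card_iff_nontrivial.mp (by omega)
  obtain ⟨S, hS, hcard⟩ := hT.hasHalfNTDSet (by omega)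
  have hGT : ntdNum G ≤ ntdNum T :=
    ntdNum_le_of_le hle hT.connected.preconnected.exists_adj_of_nontrivial
  have hTS := ntdNum_le hS
  obtain ⟨k, hk⟩ := heven
  omega

theorem stmt17 [Fintype V] (G : SimpleGraph V) (hG : G.Connected)
    (heven : Even (Fintype.card V)) (hn : 4 ≤ Fintype.card V)
    (h : 2 * ntdNum G = Fintype.card V) :
    ∀ T : SimpleGraph V, T ≤ G → T.IsTree → 2 * ntdNum T = Fintype.card V :=
  stmt17_general G heven hn h
end
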